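/- For integers a, b, let [a; b]_q denote the Gaussian binomial coefficient: the polynomial in q equal to ∏_{i=1}^{b} (1−q^{a−b+i})/(1−q^i) when 0 ≤ b ≤ a, and 0 otherwise. Work in the ring of Laurent polynomials ℤ[q, z, z^{−1}]. For a parameter t, let P(t) be the 3×3 matrix [[1, 1, 1], [t(1+z²), t, 0], [t·z^{−2} + t², t·z^{−2}, 0]], and for N ≥ 1 set P^{(N)} = P(q^N)·P(q^{N−1})⋯P(q) (a product of N matrices). For e = (e₁,e₂,e₃) ∈ ℤ³ define c(N, e) = Σ_{n = (n₁,n₂,n₃) ∈ ℕ³} z^{2(n₃−n₁)} q^{n₁²+n₂²+n₃²+n₁n₂+n₂n₃ + e₁n₁+e₂n₂+e₃n₃} · [N − n₁ − n₂ − e₁; n₁]_q · [N − n₁ − n₂ − n₃ − e₂; n₂]_q · [N − n₂ − n₃ − e₃; n₃]_q (a finite sum). Then for all N ≥ 1: the (1,1) entry of P^{(N)} equals c(N, (0,0,0)); the (1,2) entry of P^{(N)} equals c(N, (0,0,1)); and the (1,3) entry of P^{(N)} equals c(N, (1,1,1)). -/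

import Mathlib

/-- The Gaussian binomial coefficient `[a; b]_q`: equal to
`∏_{i=1}^{b} (1 − q^{a−b+i})/(1 − q^i)` when `0 ≤ b ≤ a`, and `0` otherwise. -/
noncomputable def gaussBinom {K : Type*} [Field K] (q : K) (a b : ℤ) : K :=
  if 0 ≤ b ∧ b ≤ a then
    ∏ i ∈ Finset.range b.toNat, (1 - q ^ (a - b + (i : ℤ) + 1)) / (1 - q ^ ((i : ℤ) + 1))
  else 0

/-- The field of rational functions in the two independent variables `q, z`
(in which `ℤ[q, z, z⁻¹]` embeds). -/
noncomputable abbrev QZ : Type := FractionRing (MvPolynomial (Fin 2) ℚ)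

/-- The variable `q`. -/
noncomputable def qz : QZ := algebraMap (MvPolynomial (Fin 2) ℚ) QZ (MvPolynomial.X 0)

/-- The variable `z`. -/
noncomputable def zz : QZ := algebraMap (MvPolynomial (Fin 2) ℚ) QZ (MvPolynomial.X 1)

/-- The transfer matrix
`P(t) = [[1, 1, 1], [t(1+z²), t, 0], [t z⁻² + t², t z⁻², 0]]`. -/
noncomputable def Pmat (t : QZ) : Matrix (Fin 3) (Fin 3) QZ :=
  !![1, 1, 1;
     t * (1 + zz ^ 2), t, 0;
     t * zz ^ (-2 : ℤ) + t ^ 2, t * zz ^ (-2 : ℤ), 0]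

/-- The product `P^{(N)} = P(q^N) · P(q^{N−1}) ⋯ P(q)` (with `P^{(0)} = 1`). -/
noncomputable def transferProd : ℕ → Matrix (Fin 3) (Fin 3) QZ
  | 0 => 1
  | n + 1 => Pmat (qz ^ (n + 1)) * transferProd n

/-- The fermionic sum
`c(N, e) = Σ_{n ∈ ℕ³} z^{2(n₃−n₁)} q^{n₁²+n₂²+n₃²+n₁n₂+n₂n₃+e₁n₁+e₂n₂+e₃n₃}
  [N−n₁−n₂−e₁; n₁]_q [N−n₁−n₂−n₃−e₂; n₂]_q [N−n₂−n₃−e₃; n₃]_q`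
(a finite sum, the summand vanishing for large `n`). -/
noncomputable def cferm (N : ℕ) (e₁ e₂ e₃ : ℤ) : QZ :=
  ∑ᶠ n₁ : ℕ, ∑ᶠ n₂ : ℕ, ∑ᶠ n₃ : ℕ,
    zz ^ (2 * ((n₃ : ℤ) - (n₁ : ℤ))) *
    qz ^ ((n₁ : ℤ) ^ 2 + (n₂ : ℤ) ^ 2 + (n₃ : ℤ) ^ 2 + (n₁ : ℤ) * n₂ + (n₂ : ℤ) * n₃
           + e₁ * n₁ + e₂ * n₂ + e₃ * n₃) *
    gaussBinom qz ((N : ℤ) - n₁ - n₂ - e₁) (n₁ : ℤ) *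
    gaussBinom qz ((N : ℤ) - n₁ - n₂ - n₃ - e₂) (n₂ : ℤ) *
    gaussBinom qz ((N : ℤ) - n₂ - n₃ - e₃) (n₃ : ℤ)

open Finset

section Aux

lemma qz_ne_zero : qz ≠ 0 := by
  simp only [qz]
  exact (map_ne_zero_iff _ (IsFractionRing.injective (MvPolynomial (Fin 2) ℚ) QZ)).mpr
    (MvPolynomial.X_ne_zero 0)

lemma zz_ne_zero : zz ≠ 0 := by
  simp only [zz]
  exact (map_ne_zero_iff _ (IsFractionRing.injective (MvPolynomial (Fin 2) ℚ) QZ)).mpr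
    (MvPolynomial.X_ne_zero 1)

lemma one_sub_qz_pow_ne_zero (n : ℕ) : (1 : QZ) - qz ^ (n+1) ≠ 0 := by
  intro h
  have h1 : qz ^ (n+1) = 1 := by linear_combination -h
  have h2 : (MvPolynomial.X 0 : MvPolynomial (Fin 2) ℚ) ^ (n+1) = 1 :=
    IsFractionRing.injective (MvPolynomial (Fin 2) ℚ) QZ (by rw [map_pow, map_one]; exact h1)
  have h3 := congrArg (MvPolynomial.eval (fun _ => (0:ℚ))) h2
  simp [zero_pow] at h3

/-- `w = z²`. -/
noncomputable def w : QZ := zz ^ 2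

lemma w_ne_zero : w ≠ 0 := pow_ne_zero 2 zz_ne_zero

noncomputable def gB (a : ℤ) (b : ℕ) : QZ := gaussBinom qz a b

noncomputable def Np (a : ℤ) (c : ℕ) : QZ := ∏ i ∈ Finset.range c, (1 - qz ^ (a + i))

lemma one_sub_qz_zpow_ne_zero {m : ℤ} (h : 1 ≤ m) : (1 : QZ) - qz ^ m ≠ 0 := by
  obtain ⟨n, rfl⟩ : ∃ n : ℕ, m = (n : ℤ) + 1 := ⟨(m-1).toNat, by omega⟩
  have := one_sub_qz_pow_ne_zero n
  rwa [show ((n:ℤ)+1) = ((n+1 : ℕ) : ℤ) by push_cast; ring, zpow_natCast]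

lemma Np_one_ne_zero (c : ℕ) : Np 1 c ≠ 0 := by
  rw [Np]
  refine Finset.prod_ne_zero_iff.mpr fun i _ => ?_
  exact one_sub_qz_zpow_ne_zero (by omega)

lemma gB_eq_zero {a : ℤ} {b : ℕ} (h : a < b) : gB a b = 0 := by
  rw [gB, gaussBinom, if_neg]
  rintro ⟨-, h2⟩; omega

lemma gB_zero {a : ℤ} (h : 0 ≤ a) : gB a 0 = 1 := by
  rw [gB, gaussBinom, if_pos ⟨le_refl 0, h⟩]
  simp

lemma gB_eq_div {a : ℤ} {b : ℕ} (h : (b:ℤ) ≤ a) : gB a b = Np (a - b + 1) b / Np 1 b := by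
  rw [gB, gaussBinom, if_pos ⟨Int.natCast_nonneg b, h⟩, Np, Np, Int.toNat_natCast,
    ← Finset.prod_div_distrib]
  refine Finset.prod_congr rfl fun i _ => ?_
  congr 2 <;> ring

lemma gB_pascal (a : ℤ) (b : ℕ) :
    gB a (b+1) = qz^(b+1) * gB (a-1) (b+1) + gB (a-1) b := by
  rcases lt_trichotomy a ((b:ℤ)+1) with hlt | heq | hgt
  · rw [gB_eq_zero (by push_cast; omega), gB_eq_zero (by push_cast; omega),
      gB_eq_zero (by omega)]
    ring
  · rw [gB_eq_div (by push_cast; omega), gB_eq_zero (by push_cast; omega),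
      gB_eq_div (by omega)]
    rw [show a - ((b+1:ℕ):ℤ) + 1 = 1 by push_cast; omega, show a - 1 - b + 1 = 1 by omega]
    rw [div_self (Np_one_ne_zero _), div_self (Np_one_ne_zero _)]
    ring
  · rw [gB_eq_div (by push_cast; omega), gB_eq_div (by push_cast; omega),
      gB_eq_div (by omega)]
    rw [show a - ((b+1:ℕ):ℤ) + 1 = a - b by push_cast; omega,
      show a - 1 - ((b+1:ℕ):ℤ) + 1 = a - (b:ℤ) - 1 by push_cast; omega,
      show a - 1 - b + 1 = a - (b:ℤ) by ring]
    have p1 : Np (a - (b:ℤ)) (b+1) = Np (a-(b:ℤ)) b * (1 - qz ^ a) := by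
      have h : a - (b:ℤ) + (b:ℕ) = a := by push_cast; ring
      rw [Np, Finset.prod_range_succ, h, Np]
    have p2 : Np (a - (b:ℤ) - 1) (b+1) = (1 - qz ^ (a - (b:ℤ) - 1)) * Np (a-(b:ℤ)) b := by
      rw [Np, Finset.prod_range_succ', Np, mul_comm]
      have h0 : a - (b:ℤ) - 1 + ((0:ℕ):ℤ) = a - (b:ℤ) - 1 := by push_cast; ring
      rw [h0]
      congr 1
      refine Finset.prod_congr rfl fun i _ => ?_
      have h1 : a - (b:ℤ) - 1 + ((i+1:ℕ):ℤ) = a - (b:ℤ) + (i:ℕ) := by push_cast; ring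
      rw [h1]
    have p3 : Np 1 (b+1) = Np 1 b * (1 - qz ^ (b+1)) := by
      have h : (1:ℤ) + (b:ℕ) = ((b+1:ℕ):ℤ) := by push_cast; ring
      rw [Np, Finset.prod_range_succ, h, zpow_natCast, Np]
    rw [p1, p2, p3]
    have hD : Np 1 b ≠ 0 := Np_one_ne_zero b
    have hc : (1:QZ) - qz ^ (b+1) ≠ 0 := one_sub_qz_pow_ne_zero b
    have hur : qz^(b+1) * qz ^ (a - (b:ℤ) - 1) = qz ^ a := by
      rw [← zpow_natCast qz (b+1), ← zpow_add₀ qz_ne_zero]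
      congr 1
      push_cast; ring
    have e4 : Np (a-(b:ℤ)) b / Np 1 b
        = Np (a-(b:ℤ)) b * (1 - qz^(b+1)) / (Np 1 b * (1 - qz^(b+1))) := by
      rw [div_eq_div_iff hD (mul_ne_zero hD hc)]; ring
    rw [e4, mul_div_assoc', ← add_div]
    congr 1
    linear_combination (Np (a-(b:ℤ)) b) * hur
/-- The exponent of `q`. -/
def Ex (M e₁ e₂ e₃ n₁ n₂ n₃ : ℕ) : ℕ :=
  n₁*n₁+n₂*n₂+n₃*n₃+n₁*n₂+n₂*n₃+e₁*n₁+e₂*n₂+e₃*n₃+M*(n₁+n₂+n₃)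

/-- The summand of the fermionic sum. -/
noncomputable def trm (K M e₁ e₂ e₃ n₁ n₂ n₃ : ℕ) : QZ :=
  w^n₃ * (w^n₁)⁻¹ * qz^(Ex M e₁ e₂ e₃ n₁ n₂ n₃) *
  (gB ((K:ℤ)-n₁-n₂-e₁) n₁ * gB ((K:ℤ)-n₁-n₂-n₃-e₂) n₂ * gB ((K:ℤ)-n₂-n₃-e₃) n₃)

/-- The generalized fermionic sum. -/
noncomputable def S (K M e₁ e₂ e₃ : ℕ) : QZ :=
  ∑ n₁ ∈ range (K+1), ∑ n₂ ∈ range (K+1), ∑ n₃ ∈ range (K+1), trm K M e₁ e₂ e₃ n₁ n₂ n₃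

lemma trm_zero₁ {K M e₁ e₂ e₃ n₁ n₂ n₃ : ℕ} (h : (K:ℤ)-n₁-n₂-e₁ < n₁) :
    trm K M e₁ e₂ e₃ n₁ n₂ n₃ = 0 := by
  simp [trm, gB_eq_zero h]

lemma trm_zero₂ {K M e₁ e₂ e₃ n₁ n₂ n₃ : ℕ} (h : (K:ℤ)-n₁-n₂-n₃-e₂ < n₂) :
    trm K M e₁ e₂ e₃ n₁ n₂ n₃ = 0 := by
  simp [trm, gB_eq_zero h]

lemma trm_zero₃ {K M e₁ e₂ e₃ n₁ n₂ n₃ : ℕ} (h : (K:ℤ)-n₂-n₃-e₃ < n₃) :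
    trm K M e₁ e₂ e₃ n₁ n₂ n₃ = 0 := by
  simp [trm, gB_eq_zero h]

lemma sum_shrink {B : ℕ} (f : ℕ → QZ) (h : f B = 0) :
    ∑ x ∈ range (B+1), f x = ∑ x ∈ range B, f x := by
  rw [Finset.sum_range_succ, h, add_zero]
lemma t3_pascal (K M e₁ e₂ e₃ n₁ n₂ j : ℕ) :
    trm K M e₁ e₂ e₃ n₁ n₂ (j+1)
      = trm K M e₁ e₂ (e₃+1) n₁ n₂ (j+1)
        + qz^(M+1+e₃) * w * trm K M e₁ (e₂+1) (e₃+2) n₁ n₂ j := by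
  have pas : gB ((K:ℤ)-n₂-(j+1:ℕ)-e₃) (j+1)
      = qz^(j+1) * gB ((K:ℤ)-n₂-((j+1:ℕ):ℤ)-((e₃+1:ℕ):ℤ)) (j+1)
        + gB ((K:ℤ)-n₂-(j:ℕ)-((e₃+2:ℕ):ℤ)) j := by
    rw [gB_pascal]
    congr 1
    · rw [show (K:ℤ)-n₂-((j+1:ℕ):ℤ)-e₃-1 = (K:ℤ)-n₂-((j+1:ℕ):ℤ)-((e₃+1:ℕ):ℤ) by
        push_cast; ring]
    · rw [show (K:ℤ)-n₂-((j+1:ℕ):ℤ)-e₃-1 = (K:ℤ)-n₂-(j:ℕ)-((e₃+2:ℕ):ℤ) by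
        push_cast; ring]
  simp only [trm]
  rw [pas]
  rw [show (K:ℤ)-n₁-n₂-(j:ℕ)-((e₂+1:ℕ):ℤ) = (K:ℤ)-n₁-n₂-((j+1:ℕ):ℤ)-(e₂:ℤ) by
    push_cast; ring]
  rw [show Ex M e₁ e₂ (e₃+1) n₁ n₂ (j+1) = Ex M e₁ e₂ e₃ n₁ n₂ (j+1) + (j+1) by
    simp only [Ex]; ring]
  rw [show Ex M e₁ e₂ e₃ n₁ n₂ (j+1) = Ex M e₁ (e₂+1) (e₃+2) n₁ n₂ j + (M+1+e₃) by
    simp only [Ex]; ring]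
  rw [pow_add, pow_add, pow_succ]
  ring

lemma t3_zero {K M e₁ e₂ e₃ n₁ n₂ : ℕ}
    (hexc : (K:ℤ) = n₂ + e₃ →
      gB ((K:ℤ)-n₁-n₂-e₁) n₁ * gB ((K:ℤ)-n₁-n₂-e₂) n₂ = 0) :
    trm K M e₁ e₂ e₃ n₁ n₂ 0 = trm K M e₁ e₂ (e₃+1) n₁ n₂ 0 := by
  have hEx : Ex M e₁ e₂ (e₃+1) n₁ n₂ 0 = Ex M e₁ e₂ e₃ n₁ n₂ 0 := by simp only [Ex]; ring
  simp only [trm, hEx, Nat.cast_zero, sub_zero]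
  rcases lt_trichotomy ((K:ℤ)-n₂-e₃) 0 with hlt | heq0 | hgt
  · rw [gB_eq_zero (a := (K:ℤ)-n₂-e₃) (b := 0) (by push_cast; omega),
      gB_eq_zero (a := (K:ℤ)-n₂-((e₃+1:ℕ):ℤ)) (b := 0) (by push_cast; omega)]
  · rw [hexc (by omega)]
    simp
  · rw [gB_zero (by omega), gB_zero (a := (K:ℤ)-n₂-((e₃+1:ℕ):ℤ)) (by push_cast; omega)]
lemma t1_pascal (K M e₁ e₂ e₃ n₂ n₃ j : ℕ) :
    trm K M e₁ e₂ e₃ (j+1) n₂ n₃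
      = trm K M (e₁+1) e₂ e₃ (j+1) n₂ n₃
        + qz^(M+1+e₁) * w⁻¹ * trm K M (e₁+2) (e₂+1) e₃ j n₂ n₃ := by
  have pas : gB ((K:ℤ)-(j+1:ℕ)-n₂-e₁) (j+1)
      = qz^(j+1) * gB ((K:ℤ)-((j+1:ℕ):ℤ)-n₂-((e₁+1:ℕ):ℤ)) (j+1)
        + gB ((K:ℤ)-(j:ℕ)-n₂-((e₁+2:ℕ):ℤ)) j := by
    rw [gB_pascal]
    congr 1
    · rw [show (K:ℤ)-((j+1:ℕ):ℤ)-n₂-e₁-1 = (K:ℤ)-((j+1:ℕ):ℤ)-n₂-((e₁+1:ℕ):ℤ) by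
        push_cast; ring]
    · rw [show (K:ℤ)-((j+1:ℕ):ℤ)-n₂-e₁-1 = (K:ℤ)-(j:ℕ)-n₂-((e₁+2:ℕ):ℤ) by
        push_cast; ring]
  simp only [trm]
  rw [pas]
  rw [show (K:ℤ)-(j:ℕ)-n₂-n₃-((e₂+1:ℕ):ℤ) = (K:ℤ)-((j+1:ℕ):ℤ)-n₂-n₃-(e₂:ℤ) by
    push_cast; ring]
  rw [show Ex M (e₁+1) e₂ e₃ (j+1) n₂ n₃ = Ex M e₁ e₂ e₃ (j+1) n₂ n₃ + (j+1) by
    simp only [Ex]; ring]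
  rw [show Ex M e₁ e₂ e₃ (j+1) n₂ n₃ = Ex M (e₁+2) (e₂+1) e₃ j n₂ n₃ + (M+1+e₁) by
    simp only [Ex]; ring]
  rw [pow_add, pow_add, pow_succ, mul_inv]
  ring

lemma t1_zero {K M e₁ e₂ e₃ n₂ n₃ : ℕ}
    (hexc : (K:ℤ) = n₂ + e₁ →
      gB ((K:ℤ)-n₂-n₃-e₂) n₂ * gB ((K:ℤ)-n₂-n₃-e₃) n₃ = 0) :
    trm K M e₁ e₂ e₃ 0 n₂ n₃ = trm K M (e₁+1) e₂ e₃ 0 n₂ n₃ := by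
  have hEx : Ex M (e₁+1) e₂ e₃ 0 n₂ n₃ = Ex M e₁ e₂ e₃ 0 n₂ n₃ := by simp only [Ex]; ring
  simp only [trm, hEx, Nat.cast_zero, sub_zero]
  rcases lt_trichotomy ((K:ℤ)-n₂-e₁) 0 with hlt | heq0 | hgt
  · rw [gB_eq_zero (a := (K:ℤ)-n₂-e₁) (b := 0) (by push_cast; omega),
      gB_eq_zero (a := (K:ℤ)-n₂-((e₁+1:ℕ):ℤ)) (b := 0) (by push_cast; omega)]
  · have h23 := hexc (by omega)
    rw [mul_assoc (gB ((K:ℤ)-n₂-e₁) 0), mul_assoc (gB ((K:ℤ)-n₂-((e₁+1:ℕ):ℤ)) 0), h23]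
    simp
  · rw [gB_zero (by omega), gB_zero (a := (K:ℤ)-n₂-((e₁+1:ℕ):ℤ)) (by push_cast; omega)]

lemma t2_pascal (K M e₁ e₂ e₃ n₁ n₃ j : ℕ) :
    trm K M e₁ e₂ e₃ n₁ (j+1) n₃
      = trm K M e₁ (e₂+1) e₃ n₁ (j+1) n₃
        + qz^(M+1+e₂) * trm K M (e₁+1) (e₂+2) (e₃+1) n₁ j n₃ := by
  have pas : gB ((K:ℤ)-n₁-(j+1:ℕ)-n₃-e₂) (j+1)
      = qz^(j+1) * gB ((K:ℤ)-n₁-((j+1:ℕ):ℤ)-n₃-((e₂+1:ℕ):ℤ)) (j+1)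
        + gB ((K:ℤ)-n₁-(j:ℕ)-n₃-((e₂+2:ℕ):ℤ)) j := by
    rw [gB_pascal]
    congr 1
    · rw [show (K:ℤ)-n₁-((j+1:ℕ):ℤ)-n₃-e₂-1 = (K:ℤ)-n₁-((j+1:ℕ):ℤ)-n₃-((e₂+1:ℕ):ℤ) by
        push_cast; ring]
    · rw [show (K:ℤ)-n₁-((j+1:ℕ):ℤ)-n₃-e₂-1 = (K:ℤ)-n₁-(j:ℕ)-n₃-((e₂+2:ℕ):ℤ) by
        push_cast; ring]
  simp only [trm]
  rw [pas]
  rw [show (K:ℤ)-n₁-(j:ℕ)-((e₁+1:ℕ):ℤ) = (K:ℤ)-n₁-((j+1:ℕ):ℤ)-(e₁:ℤ) by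
    push_cast; ring]
  rw [show (K:ℤ)-(j:ℕ)-n₃-((e₃+1:ℕ):ℤ) = (K:ℤ)-((j+1:ℕ):ℤ)-n₃-(e₃:ℤ) by
    push_cast; ring]
  rw [show Ex M e₁ (e₂+1) e₃ n₁ (j+1) n₃ = Ex M e₁ e₂ e₃ n₁ (j+1) n₃ + (j+1) by
    simp only [Ex]; ring]
  rw [show Ex M e₁ e₂ e₃ n₁ (j+1) n₃ = Ex M (e₁+1) (e₂+2) (e₃+1) n₁ j n₃ + (M+1+e₂) by
    simp only [Ex]; ring]
  rw [pow_add, pow_add]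
  ring

lemma t2_zero {K M e₁ e₂ e₃ n₁ n₃ : ℕ}
    (hexc : (K:ℤ) = n₁ + n₃ + e₂ →
      gB ((K:ℤ)-n₁-e₁) n₁ * gB ((K:ℤ)-n₃-e₃) n₃ = 0) :
    trm K M e₁ e₂ e₃ n₁ 0 n₃ = trm K M e₁ (e₂+1) e₃ n₁ 0 n₃ := by
  have hEx : Ex M e₁ (e₂+1) e₃ n₁ 0 n₃ = Ex M e₁ e₂ e₃ n₁ 0 n₃ := by simp only [Ex]; ring
  simp only [trm, hEx, Nat.cast_zero, sub_zero]
  rcases lt_trichotomy ((K:ℤ)-n₁-n₃-e₂) 0 with hlt | heq0 | hgt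
  · rw [gB_eq_zero (a := (K:ℤ)-n₁-n₃-e₂) (b := 0) (by push_cast; omega),
      gB_eq_zero (a := (K:ℤ)-n₁-n₃-((e₂+1:ℕ):ℤ)) (b := 0) (by push_cast; omega)]
  · have h23 := hexc (by omega)
    rw [show gB ((K:ℤ)-n₁-e₁) n₁ * gB ((K:ℤ)-n₁-n₃-e₂) 0 * gB ((K:ℤ)-n₃-e₃) n₃
        = gB ((K:ℤ)-n₁-n₃-e₂) 0 * (gB ((K:ℤ)-n₁-e₁) n₁ * gB ((K:ℤ)-n₃-e₃) n₃) by ring,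
      show gB ((K:ℤ)-n₁-e₁) n₁ * gB ((K:ℤ)-n₁-n₃-((e₂+1:ℕ):ℤ)) 0 * gB ((K:ℤ)-n₃-e₃) n₃
        = gB ((K:ℤ)-n₁-n₃-((e₂+1:ℕ):ℤ)) 0 * (gB ((K:ℤ)-n₁-e₁) n₁ * gB ((K:ℤ)-n₃-e₃) n₃) by
        ring, h23]
    simp
  · rw [gB_zero (by omega), gB_zero (a := (K:ℤ)-n₁-n₃-((e₂+1:ℕ):ℤ)) (by push_cast; omega)]
lemma move3 (K M e₁ e₂ e₃ : ℕ)
    (hexc : ∀ n₁ n₂ : ℕ, (K:ℤ) = n₂ + e₃ →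
      gB ((K:ℤ)-n₁-n₂-e₁) n₁ * gB ((K:ℤ)-n₁-n₂-e₂) n₂ = 0) :
    S K M e₁ e₂ e₃ = S K M e₁ e₂ (e₃+1) + qz^(M+1+e₃) * w * S K M e₁ (e₂+1) (e₃+2) := by
  simp only [S]
  have inner : ∀ n₁ n₂ : ℕ, ∑ n₃ ∈ range (K+1), trm K M e₁ e₂ e₃ n₁ n₂ n₃
      = (∑ n₃ ∈ range (K+1), trm K M e₁ e₂ (e₃+1) n₁ n₂ n₃)
        + qz^(M+1+e₃) * w * ∑ n₃ ∈ range (K+1), trm K M e₁ (e₂+1) (e₃+2) n₁ n₂ n₃ := by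
    intro n₁ n₂
    calc ∑ n₃ ∈ range (K+1), trm K M e₁ e₂ e₃ n₁ n₂ n₃
        = (∑ j ∈ range K, trm K M e₁ e₂ e₃ n₁ n₂ (j+1)) + trm K M e₁ e₂ e₃ n₁ n₂ 0 :=
          Finset.sum_range_succ' _ K
      _ = (∑ j ∈ range K, (trm K M e₁ e₂ (e₃+1) n₁ n₂ (j+1)
              + qz^(M+1+e₃) * w * trm K M e₁ (e₂+1) (e₃+2) n₁ n₂ j))
            + trm K M e₁ e₂ (e₃+1) n₁ n₂ 0 := by
          rw [t3_zero (hexc n₁ n₂)]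
          congr 1
          exact Finset.sum_congr rfl fun j _ => t3_pascal K M e₁ e₂ e₃ n₁ n₂ j
      _ = ((∑ j ∈ range K, trm K M e₁ e₂ (e₃+1) n₁ n₂ (j+1)) + trm K M e₁ e₂ (e₃+1) n₁ n₂ 0)
            + qz^(M+1+e₃) * w * ∑ j ∈ range K, trm K M e₁ (e₂+1) (e₃+2) n₁ n₂ j := by
          rw [Finset.sum_add_distrib, ← Finset.mul_sum]
          ring
      _ = (∑ n₃ ∈ range (K+1), trm K M e₁ e₂ (e₃+1) n₁ n₂ n₃)
            + qz^(M+1+e₃) * w * ∑ n₃ ∈ range (K+1), trm K M e₁ (e₂+1) (e₃+2) n₁ n₂ n₃ := by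
          congr 1
          · exact (Finset.sum_range_succ' _ K).symm
          · congr 1
            exact (sum_shrink _ (trm_zero₃ (by push_cast; omega))).symm
  calc ∑ n₁ ∈ range (K+1), ∑ n₂ ∈ range (K+1), ∑ n₃ ∈ range (K+1), trm K M e₁ e₂ e₃ n₁ n₂ n₃
      = ∑ n₁ ∈ range (K+1), ∑ n₂ ∈ range (K+1),
          ((∑ n₃ ∈ range (K+1), trm K M e₁ e₂ (e₃+1) n₁ n₂ n₃)
            + qz^(M+1+e₃) * w * ∑ n₃ ∈ range (K+1), trm K M e₁ (e₂+1) (e₃+2) n₁ n₂ n₃) :=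
        Finset.sum_congr rfl fun n₁ _ => Finset.sum_congr rfl fun n₂ _ => inner n₁ n₂
    _ = _ := by
        simp only [Finset.sum_add_distrib, ← Finset.mul_sum]

lemma move1 (K M e₁ e₂ e₃ : ℕ)
    (hexc : ∀ n₂ n₃ : ℕ, (K:ℤ) = n₂ + e₁ →
      gB ((K:ℤ)-n₂-n₃-e₂) n₂ * gB ((K:ℤ)-n₂-n₃-e₃) n₃ = 0) :
    S K M e₁ e₂ e₃ = S K M (e₁+1) e₂ e₃ + qz^(M+1+e₁) * w⁻¹ * S K M (e₁+2) (e₂+1) e₃ := by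
  simp only [S]
  calc ∑ n₁ ∈ range (K+1), ∑ n₂ ∈ range (K+1), ∑ n₃ ∈ range (K+1), trm K M e₁ e₂ e₃ n₁ n₂ n₃
      = (∑ j ∈ range K, ∑ n₂ ∈ range (K+1), ∑ n₃ ∈ range (K+1),
          trm K M e₁ e₂ e₃ (j+1) n₂ n₃)
        + ∑ n₂ ∈ range (K+1), ∑ n₃ ∈ range (K+1), trm K M e₁ e₂ e₃ 0 n₂ n₃ :=
        Finset.sum_range_succ' _ K
    _ = (∑ j ∈ range K, ∑ n₂ ∈ range (K+1), ∑ n₃ ∈ range (K+1),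
          (trm K M (e₁+1) e₂ e₃ (j+1) n₂ n₃
            + qz^(M+1+e₁) * w⁻¹ * trm K M (e₁+2) (e₂+1) e₃ j n₂ n₃))
        + ∑ n₂ ∈ range (K+1), ∑ n₃ ∈ range (K+1), trm K M (e₁+1) e₂ e₃ 0 n₂ n₃ := by
        congr 1
        · exact Finset.sum_congr rfl fun j _ => Finset.sum_congr rfl fun n₂ _ =>
            Finset.sum_congr rfl fun n₃ _ => t1_pascal K M e₁ e₂ e₃ n₂ n₃ j
        · exact Finset.sum_congr rfl fun n₂ _ => Finset.sum_congr rfl fun n₃ _ =>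
            t1_zero (hexc n₂ n₃)
    _ = ((∑ j ∈ range K, ∑ n₂ ∈ range (K+1), ∑ n₃ ∈ range (K+1),
            trm K M (e₁+1) e₂ e₃ (j+1) n₂ n₃)
          + ∑ n₂ ∈ range (K+1), ∑ n₃ ∈ range (K+1), trm K M (e₁+1) e₂ e₃ 0 n₂ n₃)
        + qz^(M+1+e₁) * w⁻¹ * ∑ j ∈ range K, ∑ n₂ ∈ range (K+1), ∑ n₃ ∈ range (K+1),
            trm K M (e₁+2) (e₂+1) e₃ j n₂ n₃ := by
        simp only [Finset.sum_add_distrib, ← Finset.mul_sum]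
        ring
    _ = (∑ n₁ ∈ range (K+1), ∑ n₂ ∈ range (K+1), ∑ n₃ ∈ range (K+1),
          trm K M (e₁+1) e₂ e₃ n₁ n₂ n₃)
        + qz^(M+1+e₁) * w⁻¹ * ∑ n₁ ∈ range (K+1), ∑ n₂ ∈ range (K+1), ∑ n₃ ∈ range (K+1),
            trm K M (e₁+2) (e₂+1) e₃ n₁ n₂ n₃ := by
        congr 1
        · exact (Finset.sum_range_succ' (fun n₁ => ∑ n₂ ∈ range (K+1), ∑ n₃ ∈ range (K+1),
            trm K M (e₁+1) e₂ e₃ n₁ n₂ n₃) K).symm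
        · congr 1
          exact (sum_shrink (fun n₁ => ∑ n₂ ∈ range (K+1), ∑ n₃ ∈ range (K+1),
              trm K M (e₁+2) (e₂+1) e₃ n₁ n₂ n₃) (Finset.sum_eq_zero fun n₂ _ =>
              Finset.sum_eq_zero fun n₃ _ => trm_zero₁ (by push_cast; omega))).symm

lemma move2 (K M e₁ e₂ e₃ : ℕ)
    (hexc : ∀ n₁ n₃ : ℕ, (K:ℤ) = n₁ + n₃ + e₂ →
      gB ((K:ℤ)-n₁-e₁) n₁ * gB ((K:ℤ)-n₃-e₃) n₃ = 0) :
    S K M e₁ e₂ e₃ = S K M e₁ (e₂+1) e₃ + qz^(M+1+e₂) * S K M (e₁+1) (e₂+2) (e₃+1) := by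
  simp only [S]
  have inner : ∀ n₁ : ℕ, ∑ n₂ ∈ range (K+1), ∑ n₃ ∈ range (K+1), trm K M e₁ e₂ e₃ n₁ n₂ n₃
      = (∑ n₂ ∈ range (K+1), ∑ n₃ ∈ range (K+1), trm K M e₁ (e₂+1) e₃ n₁ n₂ n₃)
        + qz^(M+1+e₂) * ∑ n₂ ∈ range (K+1), ∑ n₃ ∈ range (K+1),
            trm K M (e₁+1) (e₂+2) (e₃+1) n₁ n₂ n₃ := by
    intro n₁
    calc ∑ n₂ ∈ range (K+1), ∑ n₃ ∈ range (K+1), trm K M e₁ e₂ e₃ n₁ n₂ n₃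
        = (∑ j ∈ range K, ∑ n₃ ∈ range (K+1), trm K M e₁ e₂ e₃ n₁ (j+1) n₃)
          + ∑ n₃ ∈ range (K+1), trm K M e₁ e₂ e₃ n₁ 0 n₃ :=
          Finset.sum_range_succ' _ K
      _ = (∑ j ∈ range K, ∑ n₃ ∈ range (K+1),
            (trm K M e₁ (e₂+1) e₃ n₁ (j+1) n₃
              + qz^(M+1+e₂) * trm K M (e₁+1) (e₂+2) (e₃+1) n₁ j n₃))
          + ∑ n₃ ∈ range (K+1), trm K M e₁ (e₂+1) e₃ n₁ 0 n₃ := by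
          congr 1
          · exact Finset.sum_congr rfl fun j _ => Finset.sum_congr rfl fun n₃ _ =>
              t2_pascal K M e₁ e₂ e₃ n₁ n₃ j
          · exact Finset.sum_congr rfl fun n₃ _ => t2_zero (hexc n₁ n₃)
      _ = ((∑ j ∈ range K, ∑ n₃ ∈ range (K+1), trm K M e₁ (e₂+1) e₃ n₁ (j+1) n₃)
            + ∑ n₃ ∈ range (K+1), trm K M e₁ (e₂+1) e₃ n₁ 0 n₃)
          + qz^(M+1+e₂) * ∑ j ∈ range K, ∑ n₃ ∈ range (K+1),
              trm K M (e₁+1) (e₂+2) (e₃+1) n₁ j n₃ := by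
          simp only [Finset.sum_add_distrib, ← Finset.mul_sum]
          ring
      _ = (∑ n₂ ∈ range (K+1), ∑ n₃ ∈ range (K+1), trm K M e₁ (e₂+1) e₃ n₁ n₂ n₃)
          + qz^(M+1+e₂) * ∑ n₂ ∈ range (K+1), ∑ n₃ ∈ range (K+1),
              trm K M (e₁+1) (e₂+2) (e₃+1) n₁ n₂ n₃ := by
          congr 1
          · exact (Finset.sum_range_succ' (fun n₂ => ∑ n₃ ∈ range (K+1),
              trm K M e₁ (e₂+1) e₃ n₁ n₂ n₃) K).symm
          · congr 1
            exact (sum_shrink (fun n₂ => ∑ n₃ ∈ range (K+1),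
                trm K M (e₁+1) (e₂+2) (e₃+1) n₁ n₂ n₃) (Finset.sum_eq_zero fun n₃ _ =>
                trm_zero₂ (by push_cast; omega))).symm
  calc ∑ n₁ ∈ range (K+1), ∑ n₂ ∈ range (K+1), ∑ n₃ ∈ range (K+1), trm K M e₁ e₂ e₃ n₁ n₂ n₃
      = ∑ n₁ ∈ range (K+1),
          ((∑ n₂ ∈ range (K+1), ∑ n₃ ∈ range (K+1), trm K M e₁ (e₂+1) e₃ n₁ n₂ n₃)
            + qz^(M+1+e₂) * ∑ n₂ ∈ range (K+1), ∑ n₃ ∈ range (K+1),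
                trm K M (e₁+1) (e₂+2) (e₃+1) n₁ n₂ n₃) :=
        Finset.sum_congr rfl fun n₁ _ => inner n₁
    _ = _ := by
        simp only [Finset.sum_add_distrib, ← Finset.mul_sum]
lemma trm_shift (K M e₁ e₂ e₃ n₁ n₂ n₃ : ℕ) :
    trm (K+1) M (e₁+1) (e₂+1) (e₃+1) n₁ n₂ n₃ = trm K (M+1) e₁ e₂ e₃ n₁ n₂ n₃ := by
  simp only [trm]
  rw [show Ex M (e₁+1) (e₂+1) (e₃+1) n₁ n₂ n₃ = Ex (M+1) e₁ e₂ e₃ n₁ n₂ n₃ by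
      simp only [Ex]; ring,
    show ((K+1:ℕ):ℤ)-n₁-n₂-((e₁+1:ℕ):ℤ) = (K:ℤ)-n₁-n₂-e₁ by push_cast; ring,
    show ((K+1:ℕ):ℤ)-n₁-n₂-n₃-((e₂+1:ℕ):ℤ) = (K:ℤ)-n₁-n₂-n₃-e₂ by push_cast; ring,
    show ((K+1:ℕ):ℤ)-n₂-n₃-((e₃+1:ℕ):ℤ) = (K:ℤ)-n₂-n₃-e₃ by push_cast; ring]

lemma S_shift (K M e₁ e₂ e₃ : ℕ) :
    S (K+1) M (e₁+1) (e₂+1) (e₃+1) = S K (M+1) e₁ e₂ e₃ := by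
  simp only [S]
  rw [sum_shrink (fun n₁ => ∑ n₂ ∈ range (K+2), ∑ n₃ ∈ range (K+2),
      trm (K+1) M (e₁+1) (e₂+1) (e₃+1) n₁ n₂ n₃) (Finset.sum_eq_zero fun n₂ _ =>
      Finset.sum_eq_zero fun n₃ _ => trm_zero₁ (by push_cast; omega))]
  refine Finset.sum_congr rfl fun n₁ hn₁ => ?_
  rw [sum_shrink (fun n₂ => ∑ n₃ ∈ range (K+2),
      trm (K+1) M (e₁+1) (e₂+1) (e₃+1) n₁ n₂ n₃) (Finset.sum_eq_zero fun n₃ _ =>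
      trm_zero₂ (by push_cast; omega))]
  refine Finset.sum_congr rfl fun n₂ hn₂ => ?_
  rw [sum_shrink (fun n₃ => trm (K+1) M (e₁+1) (e₂+1) (e₃+1) n₁ n₂ n₃)
      (trm_zero₃ (by push_cast; omega))]
  exact Finset.sum_congr rfl fun n₃ _ => trm_shift K M e₁ e₂ e₃ n₁ n₂ n₃

lemma S_zero_000 (M : ℕ) : S 0 M 0 0 0 = 1 := by
  have h : gB (0:ℤ) 0 = 1 := gB_zero le_rfl
  simp [S, show (0:ℕ)+1 = 1 from rfl, Finset.sum_range_one, trm, Ex, h]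

lemma S_zero_001 (M : ℕ) : S 0 M 0 0 1 = 0 := by
  have h : gB (-1:ℤ) 0 = 0 := gB_eq_zero (by norm_num)
  simp [S, show (0:ℕ)+1 = 1 from rfl, Finset.sum_range_one, trm, Ex, h]

lemma S_zero_111 (M : ℕ) : S 0 M 1 1 1 = 0 := by
  have h : gB (-1:ℤ) 0 = 0 := gB_eq_zero (by norm_num)
  simp [S, show (0:ℕ)+1 = 1 from rfl, Finset.sum_range_one, trm, Ex, h]

lemma ident1 (K M : ℕ) :
    S K M 0 0 1 = S K M 1 1 1 + qz^(M+1) * S K M 1 1 2 + qz^(M+1) * w⁻¹ * S K M 2 2 2 := by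
  have hC := move2 K M 0 0 1 (fun n₁ n₃ h => by
    rcases le_or_gt (n₁:ℤ) ((K:ℤ)-n₁-(0:ℕ)) with hc | hc
    · rw [gB_eq_zero (a := (K:ℤ)-n₃-((1:ℕ):ℤ)) (b := n₃) (by push_cast at h ⊢; omega),
        mul_zero]
    · rw [gB_eq_zero (a := (K:ℤ)-n₁-((0:ℕ):ℤ)) (b := n₁) (by push_cast at h hc ⊢; omega),
        zero_mul])
  have hD := move1 K M 0 1 1 (fun n₂ n₃ h => by
    rw [gB_eq_zero (a := (K:ℤ)-n₂-n₃-((1:ℕ):ℤ)) (b := n₂) (by push_cast at h ⊢; omega),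
      zero_mul])
  have hE := move2 K M 1 1 2 (fun n₁ n₃ h => by
    rcases le_or_gt (n₁:ℤ) ((K:ℤ)-n₁-(1:ℕ)) with hc | hc
    · rw [gB_eq_zero (a := (K:ℤ)-n₃-((2:ℕ):ℤ)) (b := n₃) (by push_cast at h ⊢; omega),
        mul_zero]
    · rw [gB_eq_zero (a := (K:ℤ)-n₁-((1:ℕ):ℤ)) (b := n₁) (by push_cast at h hc ⊢; omega),
        zero_mul])
  have hF := move3 K M 2 2 1 (fun n₁ n₂ h => by
    rw [gB_eq_zero (a := (K:ℤ)-n₁-n₂-((2:ℕ):ℤ)) (b := n₂) (by push_cast at h ⊢; omega),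
      mul_zero])
  have hw1 : w⁻¹ * w = 1 := inv_mul_cancel₀ w_ne_zero
  norm_num at hC hD hE hF
  linear_combination hC + hD - qz^(M+1)*hE + qz^(M+1)*w⁻¹*hF
    + qz^(M+1)*qz^(M+2)*(S K M 2 3 3)*hw1

lemma ident0 (K M : ℕ) (hK : 1 ≤ K) :
    S K M 0 0 0 = S K M 1 1 1 + qz^(M+1) * (1+w) * S K M 1 1 2
      + (qz^(M+1) * w⁻¹ + (qz^(M+1))^2) * S K M 2 2 2 := by
  have hA := move3 K M 0 0 0 (fun n₁ n₂ h => by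
    rw [gB_eq_zero (a := (K:ℤ)-n₁-n₂-((0:ℕ):ℤ)) (b := n₂) (by push_cast at h ⊢; omega),
      mul_zero])
  have hB := move1 K M 0 1 2 (fun n₂ n₃ h => by
    rw [gB_eq_zero (a := (K:ℤ)-n₂-n₃-((1:ℕ):ℤ)) (b := n₂) (by push_cast at h ⊢; omega),
      zero_mul])
  have hI1 := ident1 K M
  have hw1 : w⁻¹ * w = 1 := inv_mul_cancel₀ w_ne_zero
  norm_num at hA hB
  linear_combination hA + hI1 + qz^(M+1)*w*hB
    + (qz^(M+1))^2*(S K M 2 2 2)*(by linear_combination hw1 : w * w⁻¹ = 1)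
/-- Partial products `Fm M k = P(q^{M+k}) ⋯ P(q^{M+1})`. -/
noncomputable def Fm (M : ℕ) : ℕ → Matrix (Fin 3) (Fin 3) QZ
  | 0 => 1
  | (k+1) => Pmat (qz ^ (M+k+1)) * Fm M k

lemma transfer_eq_Fm (N : ℕ) : transferProd N = Fm 0 N := by
  induction N with
  | zero => rfl
  | succ n ih =>
    show Pmat (qz^(n+1)) * transferProd n = Pmat (qz^(0+n+1)) * Fm 0 n
    rw [ih, Nat.zero_add]

lemma Fm_succ (M k : ℕ) : Fm M (k+1) = Fm (M+1) k * Pmat (qz^(M+1)) := by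
  induction k generalizing M with
  | zero =>
    show Pmat (qz^(M+0+1)) * Fm M 0 = Fm (M+1) 0 * Pmat (qz^(M+1))
    show Pmat (qz^(M+0+1)) * 1 = 1 * Pmat (qz^(M+1))
    rw [Matrix.mul_one, Matrix.one_mul]
  | succ k ih =>
    show Pmat (qz^(M+(k+1)+1)) * Fm M (k+1) = Pmat (qz^((M+1)+k+1)) * Fm (M+1) k
      * Pmat (qz^(M+1))
    rw [ih M, ← Matrix.mul_assoc, show M+(k+1)+1 = (M+1)+k+1 by ring]

lemma w_def : w = zz ^ 2 := rfl

lemma zz_neg_two : zz ^ (-2 : ℤ) = w⁻¹ := by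
  rw [show (-2:ℤ) = -((2:ℕ):ℤ) by norm_num, zpow_neg, zpow_natCast, w]

lemma Fm_row (k : ℕ) : ∀ M : ℕ,
    Fm M k 0 0 = S k M 0 0 0 ∧ Fm M k 0 1 = S k M 0 0 1 ∧ Fm M k 0 2 = S k M 1 1 1 := by
  induction k with
  | zero =>
    intro M
    refine ⟨?_, ?_, ?_⟩
    · rw [show Fm M 0 0 0 = 1 from Matrix.one_apply_eq 0, S_zero_000]
    · rw [show Fm M 0 0 1 = 0 from Matrix.one_apply_ne (by decide), S_zero_001]
    · rw [show Fm M 0 0 2 = 0 from Matrix.one_apply_ne (by decide), S_zero_111]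
  | succ k ih =>
    intro M
    obtain ⟨h0, h1, h2⟩ := ih (M+1)
    have sh0 : S k (M+1) 0 0 0 = S (k+1) M 1 1 1 := (S_shift k M 0 0 0).symm
    have sh1 : S k (M+1) 0 0 1 = S (k+1) M 1 1 2 := (S_shift k M 0 0 1).symm
    have sh2 : S k (M+1) 1 1 1 = S (k+1) M 2 2 2 := (S_shift k M 1 1 1).symm
    rw [Fm_succ]
    refine ⟨?_, ?_, ?_⟩
    · rw [Matrix.mul_apply, Fin.sum_univ_three, h0, h1, h2, sh0, sh1, sh2]
      rw [show (Pmat (qz^(M+1))) 0 0 = 1 by simp [Pmat, Matrix.vecHead, Matrix.vecTail],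
        show (Pmat (qz^(M+1))) 1 0 = qz^(M+1) * (1 + w) by
          simp [Pmat, Matrix.vecHead, Matrix.vecTail, w_def],
        show (Pmat (qz^(M+1))) 2 0 = qz^(M+1) * w⁻¹ + (qz^(M+1))^2 by
          simp [Pmat, Matrix.vecHead, Matrix.vecTail, w_def, zz_neg_two]]
      linear_combination (ident0 (k+1) M (by omega)).symm
    · rw [Matrix.mul_apply, Fin.sum_univ_three, h0, h1, h2, sh0, sh1, sh2]
      rw [show (Pmat (qz^(M+1))) 0 1 = 1 by simp [Pmat, Matrix.vecHead, Matrix.vecTail],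
        show (Pmat (qz^(M+1))) 1 1 = qz^(M+1) by simp [Pmat, Matrix.vecHead, Matrix.vecTail],
        show (Pmat (qz^(M+1))) 2 1 = qz^(M+1) * w⁻¹ by
          simp [Pmat, Matrix.vecHead, Matrix.vecTail, w_def, zz_neg_two]]
      linear_combination (ident1 (k+1) M).symm
    · rw [Matrix.mul_apply, Fin.sum_univ_three, h0, h1, h2, sh0, sh1, sh2]
      rw [show (Pmat (qz^(M+1))) 0 2 = 1 by simp [Pmat, Matrix.vecHead, Matrix.vecTail],
        show (Pmat (qz^(M+1))) 1 2 = 0 by simp [Pmat, Matrix.vecHead, Matrix.vecTail],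
        show (Pmat (qz^(M+1))) 2 2 = 0 by simp [Pmat, Matrix.vecHead, Matrix.vecTail]]
      ring
lemma finsum_range {f : ℕ → QZ} {B : ℕ} (h : ∀ n, B ≤ n → f n = 0) :
    ∑ᶠ n, f n = ∑ n ∈ range B, f n := by
  apply finsum_eq_finset_sum_of_support_subset
  intro x hx
  simp only [coe_range, Set.mem_Iio]
  by_contra hc
  exact hx (h x (le_of_not_gt hc))

lemma gauss_is_gB (a : ℤ) (b : ℕ) : gaussBinom qz a (b:ℤ) = gB a b := rfl

lemma zz_fact (n₁ n₃ : ℕ) : zz ^ (2 * ((n₃:ℤ) - (n₁:ℤ))) = w^n₃ * (w^n₁)⁻¹ := by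
  rw [show (2:ℤ) * ((n₃:ℤ) - n₁) = 2*(n₃:ℤ) - 2*(n₁:ℤ) by ring,
    zpow_sub₀ zz_ne_zero, div_eq_mul_inv]
  congr 1
  · rw [show (2*(n₃:ℤ)) = ((2*n₃ : ℕ):ℤ) by push_cast; ring, zpow_natCast, pow_mul, w_def]
  · rw [show (2*(n₁:ℤ)) = ((2*n₁ : ℕ):ℤ) by push_cast; ring, zpow_natCast, pow_mul, w_def]

lemma cferm_eq (N e₁ e₂ e₃ : ℕ) : cferm N e₁ e₂ e₃ = S N 0 e₁ e₂ e₃ := by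
  rw [cferm]
  rw [finsum_range (B := N+1) (fun n₁ h => by
    have inner3 : ∀ n₂ n₃ : ℕ,
        zz ^ (2 * ((n₃ : ℤ) - (n₁ : ℤ))) *
        qz ^ ((n₁ : ℤ) ^ 2 + (n₂ : ℤ) ^ 2 + (n₃ : ℤ) ^ 2 + (n₁ : ℤ) * n₂ + (n₂ : ℤ) * n₃
           + (e₁:ℤ) * n₁ + (e₂:ℤ) * n₂ + (e₃:ℤ) * n₃) *
        gaussBinom qz ((N : ℤ) - n₁ - n₂ - e₁) (n₁ : ℤ) *
        gaussBinom qz ((N : ℤ) - n₁ - n₂ - n₃ - e₂) (n₂ : ℤ) *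
        gaussBinom qz ((N : ℤ) - n₂ - n₃ - e₃) (n₃ : ℤ) = 0 := fun n₂ n₃ => by
      rw [gauss_is_gB ((N : ℤ) - n₁ - n₂ - e₁) n₁, gB_eq_zero (by push_cast; omega)]
      ring
    simp only [inner3, finsum_zero])]
  refine Finset.sum_congr rfl fun n₁ _ => ?_
  rw [finsum_range (B := N+1) (fun n₂ h => by
    have inner3 : ∀ n₃ : ℕ,
        zz ^ (2 * ((n₃ : ℤ) - (n₁ : ℤ))) *
        qz ^ ((n₁ : ℤ) ^ 2 + (n₂ : ℤ) ^ 2 + (n₃ : ℤ) ^ 2 + (n₁ : ℤ) * n₂ + (n₂ : ℤ) * n₃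
           + (e₁:ℤ) * n₁ + (e₂:ℤ) * n₂ + (e₃:ℤ) * n₃) *
        gaussBinom qz ((N : ℤ) - n₁ - n₂ - e₁) (n₁ : ℤ) *
        gaussBinom qz ((N : ℤ) - n₁ - n₂ - n₃ - e₂) (n₂ : ℤ) *
        gaussBinom qz ((N : ℤ) - n₂ - n₃ - e₃) (n₃ : ℤ) = 0 := fun n₃ => by
      rw [gauss_is_gB ((N : ℤ) - n₁ - n₂ - n₃ - e₂) n₂, gB_eq_zero (by push_cast; omega)]
      ring
    simp only [inner3, finsum_zero])]
  refine Finset.sum_congr rfl fun n₂ _ => ?_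
  rw [finsum_range (B := N+1) (fun n₃ h => by
    rw [gauss_is_gB ((N : ℤ) - n₂ - n₃ - e₃) n₃, gB_eq_zero (by push_cast; omega)]
    ring)]
  refine Finset.sum_congr rfl fun n₃ _ => ?_
  rw [gauss_is_gB, gauss_is_gB, gauss_is_gB, zz_fact]
  rw [show (n₁ : ℤ) ^ 2 + (n₂ : ℤ) ^ 2 + (n₃ : ℤ) ^ 2 + (n₁ : ℤ) * n₂ + (n₂ : ℤ) * n₃
      + (e₁:ℤ) * n₁ + (e₂:ℤ) * n₂ + (e₃:ℤ) * n₃ = ((Ex 0 e₁ e₂ e₃ n₁ n₂ n₃ : ℕ) : ℤ) by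
    simp only [Ex]; push_cast; ring]
  rw [zpow_natCast]
  simp only [trm]
  ring

theorem transfer_matrix_entries_fermionic' (N : ℕ) (hN : 1 ≤ N) :
    transferProd N 0 0 = cferm N 0 0 0 ∧
    transferProd N 0 1 = cferm N 0 0 1 ∧
    transferProd N 0 2 = cferm N 1 1 1 := by
  obtain ⟨h0, h1, h2⟩ := Fm_row N 0
  have c0 := cferm_eq N 0 0 0
  have c1 := cferm_eq N 0 0 1
  have c2 := cferm_eq N 1 1 1
  norm_num at c0 c1 c2
  refine ⟨?_, ?_, ?_⟩ <;> rw [transfer_eq_Fm]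
  · rw [h0, c0]
  · rw [h1, c1]
  · rw [h2, c2]

/-- Fermionic (Gordon-type) formulas for the first-row entries of the transfer-matrix product
`P^{(N)}`: the `(1,1)`, `(1,2)`, `(1,3)` entries are `c(N,(0,0,0))`, `c(N,(0,0,1))`,
`c(N,(1,1,1))` respectively. -/
theorem transfer_matrix_entries_fermionic (N : ℕ) (hN : 1 ≤ N) :
    transferProd N 0 0 = cferm N 0 0 0 ∧
    transferProd N 0 1 = cferm N 0 0 1 ∧
    transferProd N 0 2 = cferm N 1 1 1 := by
  obtain ⟨h0, h1, h2⟩ := Fm_row N 0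
  have c0 := cferm_eq N 0 0 0
  have c1 := cferm_eq N 0 0 1
  have c2 := cferm_eq N 1 1 1
  norm_num at c0 c1 c2
  refine ⟨?_, ?_, ?_⟩ <;> rw [transfer_eq_Fm]
  · rw [h0, c0]
  · rw [h1, c1]
  · rw [h2, c2]
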